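/- Fix c with c² > 2. There exists μ₀ ∈ (0,1) such that for every μ ∈ (0, μ₀) there is exactly one ω ≥ 0 with c² μ ω² = 1 + μ + √((1+μ)² − 4μ sin²(ω)). -/

import Mathlib

/-!
For `0 < μ < 1/4` the right-hand side `λ(ω) = lamPlus μ ω` takes values in `[2, 2 + 2μ]` and
is `2μ/(1-μ)`-Lipschitz, because the radicand stays above `(1 - μ)²`. Any solution therefore
lies where `c²μω² ≥ 2`, in particular beyond `a = 4/c²` (as `c²μa² = 16μ/c² < 2`), and there
the slope `2c²μa = 8μ` of the parabola beats the Lipschitz constant of `λ`, so `c²μω² - λ(ω)`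
is strictly increasing.
The intermediate value theorem between `a` and the point where `c²μω² = 2 + 2μ` gives existence.
-/

noncomputable def lamPlus (μ ω : ℝ) : ℝ :=
  1 + μ + Real.sqrt ((1 + μ) ^ 2 - 4 * μ * (Real.sin ω) ^ 2)

open Real NNReal Set

lemma abs_sin_sq_sub_sin_sq_le (x y : ℝ) : |sin x ^ 2 - sin y ^ 2| ≤ |x - y| := by
  have hcos : sin x ^ 2 - sin y ^ 2 = (cos (2 * y) - cos (2 * x)) / 2 := by
    rw [cos_two_mul, cos_two_mul, sin_sq, sin_sq]; ring
  calc |sin x ^ 2 - sin y ^ 2| = |cos (2 * y) - cos (2 * x)| / 2 := by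
        rw [hcos, abs_div, abs_two]
    _ ≤ |2 * y - 2 * x| / 2 := by gcongr ?_ / 2; exact abs_cos_sub_cos_le _ _
    _ = |x - y| := by rw [← mul_sub, abs_mul, abs_two, abs_sub_comm]; ring

lemma abs_sqrt_sub_sqrt_le {s u v : ℝ} (hs : 0 < s) (hu : s ^ 2 ≤ u) (hv : s ^ 2 ≤ v) :
    |√u - √v| ≤ |u - v| / (2 * s) := by
  have hsu : s ≤ √u := (le_sqrt hs.le ((sq_nonneg s).trans hu)).2 hu
  have hsv : s ≤ √v := (le_sqrt hs.le ((sq_nonneg s).trans hv)).2 hv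
  have hfactor : u - v = (√u - √v) * (√u + √v) :=
    calc u - v = √u ^ 2 - √v ^ 2 := by
          rw [sq_sqrt ((sq_nonneg s).trans hu), sq_sqrt ((sq_nonneg s).trans hv)]
      _ = (√u - √v) * (√u + √v) := by ring
  rw [le_div_iff₀ (by positivity), hfactor, abs_mul, abs_of_pos (by linarith : 0 < √u + √v)]
  gcongr
  linarith

noncomputable def lamDisc (μ ω : ℝ) : ℝ := (1 + μ) ^ 2 - 4 * μ * sin ω ^ 2

lemma lamPlus_eq (μ ω : ℝ) : lamPlus μ ω = 1 + μ + √(lamDisc μ ω) := rfl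

lemma sq_one_sub_le_lamDisc {μ : ℝ} (hμ : 0 ≤ μ) (ω : ℝ) : (1 - μ) ^ 2 ≤ lamDisc μ ω := by
  unfold lamDisc
  nlinarith [sin_sq_le_one ω]

lemma two_le_lamPlus {μ : ℝ} (hμ : 0 ≤ μ) (ω : ℝ) : 2 ≤ lamPlus μ ω := by
  have := (le_abs_self (1 - μ)).trans (abs_le_sqrt (sq_one_sub_le_lamDisc hμ ω))
  rw [lamPlus_eq]
  linarith

lemma lamPlus_le {μ : ℝ} (hμ : 0 ≤ μ) (ω : ℝ) : lamPlus μ ω ≤ 2 + 2 * μ := by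
  have : √(lamDisc μ ω) ≤ 1 + μ :=
    sqrt_le_iff.2 ⟨by linarith, by unfold lamDisc; nlinarith [sq_nonneg (sin ω)]⟩
  rw [lamPlus_eq]
  linarith

lemma lipschitzWith_lamPlus {μ : ℝ} (hμ : 0 ≤ μ) (hμ1 : μ < 1) :
    LipschitzWith (2 * μ / (1 - μ)).toNNReal (lamPlus μ) := by
  refine LipschitzWith.of_dist_le' fun x y => ?_
  have hs : 0 < 1 - μ := by linarith
  calc dist (lamPlus μ x) (lamPlus μ y) = |√(lamDisc μ x) - √(lamDisc μ y)| := by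
        rw [Real.dist_eq, lamPlus_eq, lamPlus_eq, add_sub_add_left_eq_sub]
    _ ≤ |lamDisc μ x - lamDisc μ y| / (2 * (1 - μ)) :=
        abs_sqrt_sub_sqrt_le hs (sq_one_sub_le_lamDisc hμ x) (sq_one_sub_le_lamDisc hμ y)
    _ = 4 * μ * |sin y ^ 2 - sin x ^ 2| / (2 * (1 - μ)) := by
        rw [show lamDisc μ x - lamDisc μ y = 4 * μ * (sin y ^ 2 - sin x ^ 2) by
          unfold lamDisc; ring, abs_mul, abs_of_nonneg (by positivity : 0 ≤ 4 * μ)]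
    _ ≤ 4 * μ * |y - x| / (2 * (1 - μ)) := by
        gcongr 4 * μ * ?_ / _; exact abs_sin_sq_sub_sin_sq_le y x
    _ = 2 * μ / (1 - μ) * dist x y := by
        rw [Real.dist_eq, abs_sub_comm]; field_simp; ring

lemma strictMonoOn_mul_sq_sub_of_lipschitzWith {L : ℝ → ℝ} {A a : ℝ} {K : ℝ≥0} (hA : 0 ≤ A)
    (hL : LipschitzWith K L) (hK : K < 2 * A * a) :
    StrictMonoOn (fun ω => A * ω ^ 2 - L ω) (Ici a) := by
  intro x hx y hy hxy
  have hLy : L y - L x ≤ K * (y - x) := by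
    have := hL.dist_le_mul y x
    rw [Real.dist_eq, Real.dist_eq, abs_of_pos (sub_pos.2 hxy)] at this
    exact (le_abs_self _).trans this
  have hparabola : 2 * A * a * (y - x) ≤ A * y ^ 2 - A * x ^ 2 := by
    have : 2 * a * (y - x) ≤ (y + x) * (y - x) :=
      mul_le_mul_of_nonneg_right (by linarith [mem_Ici.1 hx, mem_Ici.1 hy]) (sub_pos.2 hxy).le
    nlinarith [mul_le_mul_of_nonneg_left this hA]
  have := mul_lt_mul_of_pos_right hK (sub_pos.2 hxy)
  dsimp only
  linarith

theorem existsUnique_mul_sq_eq_of_lipschitzWith {L : ℝ → ℝ} {A a M : ℝ} {K : ℝ≥0} (hA : 0 < A)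
    (hlow : ∀ ω, A * a ^ 2 ≤ L ω) (hup : ∀ ω, L ω ≤ M) (hL : LipschitzWith K L)
    (hK : K < 2 * A * a) :
    ∃! ω, 0 ≤ ω ∧ A * ω ^ 2 = L ω := by
  have ha : 0 < a := by nlinarith [K.coe_nonneg]
  have hmono := strictMonoOn_mul_sq_sub_of_lipschitzWith hA.le hL hK
  have hsol_ge : ∀ ω, 0 ≤ ω → A * ω ^ 2 = L ω → a ≤ ω := fun ω hω h =>
    (pow_le_pow_iff_left₀ ha.le hω two_ne_zero).1
      (le_of_mul_le_mul_left ((hlow ω).trans h.ge) hA)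
  have hM : 0 ≤ M / A := div_nonneg ((by positivity : 0 ≤ A * a ^ 2).trans
    ((hlow 0).trans (hup 0))) hA.le
  have hab : a ≤ √(M / A) :=
    (le_sqrt ha.le hM).2 ((le_div_iff₀' hA).2 ((hlow 0).trans (hup 0)))
  have hAb : A * √(M / A) ^ 2 = M := by rw [sq_sqrt hM, mul_div_cancel₀ _ hA.ne']
  obtain ⟨ω, ⟨haω, -⟩, hω⟩ := intermediate_value_Icc hab
    (f := fun ω => A * ω ^ 2 - L ω)
    ((continuous_const.mul (continuous_pow 2)).sub hL.continuous).continuousOn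
    (show (0 : ℝ) ∈ Icc _ _ from ⟨by linarith [hlow a], by linarith [hup (√(M / A))]⟩)
  refine ⟨ω, ⟨ha.le.trans haω, by linarith⟩, fun ω' ⟨hω'0, hω'⟩ => ?_⟩
  exact hmono.injOn (hsol_ge ω' hω'0 hω') haω (by dsimp only at hω ⊢; linarith)

theorem stmt_12 (c : ℝ) (hc : 2 < c ^ 2) :
    ∃ μ₀ : ℝ, 0 < μ₀ ∧ μ₀ < 1 ∧
      ∀ μ : ℝ, 0 < μ → μ < μ₀ →
        ∃! ω : ℝ, 0 ≤ ω ∧ c ^ 2 * μ * ω ^ 2 = lamPlus μ ω := by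
  refine ⟨1 / 4, by norm_num, by norm_num, fun μ hμ hμ₀ => ?_⟩
  have hc0 : 0 < c ^ 2 := by linarith
  refine existsUnique_mul_sq_eq_of_lipschitzWith (a := 4 / c ^ 2) (by positivity) (fun ω => ?_)
    (lamPlus_le hμ.le) (lipschitzWith_lamPlus hμ.le (by linarith)) ?_
  · calc c ^ 2 * μ * (4 / c ^ 2) ^ 2 = 16 * μ / c ^ 2 := by field_simp; norm_num
      _ ≤ 2 := by rw [div_le_iff₀ hc0]; linarith
      _ ≤ lamPlus μ ω := two_le_lamPlus hμ.le ω
  · have hslope : 2 * (c ^ 2 * μ) * (4 / c ^ 2) = 8 * μ := by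
      rw [show 2 * (c ^ 2 * μ) * (4 / c ^ 2) = 8 * μ * (c ^ 2 / c ^ 2) by ring,
        div_self hc0.ne', mul_one]
    rw [coe_toNNReal _ (div_nonneg (by linarith) (by linarith)), hslope,
      div_lt_iff₀ (by linarith)]
    nlinarith
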